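/- arXiv:2501.15287 — 5 statements merged into one kernel-verified Lean document; each statement's English description precedes it below -/
import Mathlib

section
/- Let A be the N×N nilpotent matrix with superdiagonal entries ν_i, J = diag(N−1,…,1,0), and W(t) = t^α e^{−t} e^{At} t^{J/2} (t^{J/2})^* e^{A*t} for t>0. Then for all t>0: JW(t) − W(t)J = t(AW(t) − W(t)A*). -/
open Matrix
open scoped Nat
noncomputable section

def matA (N : ℕ) (ν : ℕ → ℂ) : Matrix (Fin N) (Fin N) ℂ :=
  Matrix.of fun i j => if (j : ℕ) = (i : ℕ) + 1 then ν ((i : ℕ) + 1) else 0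

def matJ (N : ℕ) : Matrix (Fin N) (Fin N) ℂ :=
  Matrix.diagonal fun i => ((N - 1 - (i : ℕ) : ℕ) : ℂ)

/-- `t^(J/2) = e^{(J/2) log t}`, a diagonal matrix with entries `t^((N-1-i)/2)`. -/
def tJhalf (N : ℕ) (t : ℝ) : Matrix (Fin N) (Fin N) ℂ :=
  Matrix.diagonal fun i => (t : ℂ) ^ ((((N - 1 - (i : ℕ) : ℕ) : ℂ)) / 2)

/-- The weight `W(t) = t^α e^{-t} e^{At} t^{J/2} (t^{J/2})^* e^{A^* t}`. -/
def weightW (N : ℕ) (ν : ℕ → ℂ) (α : ℝ) (t : ℝ) : Matrix (Fin N) (Fin N) ℂ :=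
  (t ^ α * Real.exp (-t)) •
    (NormedSpace.exp ((t : ℂ) • matA N ν) * tJhalf N t * (tJhalf N t)ᴴ *
      NormedSpace.exp ((t : ℂ) • (matA N ν)ᴴ))

-- entries of powers
lemma matA_pow_entry (N : ℕ) (ν : ℕ → ℂ) :
    ∀ (k : ℕ) (i j : Fin N), (j : ℕ) ≠ (i : ℕ) + k → (matA N ν ^ k) i j = 0 := by
  intro k
  induction k with
  | zero => intro i j h; simp only [pow_zero, Matrix.one_apply, Fin.ext_iff]; rw [if_neg]; omega
  | succ k ih =>
    intro i j h
    rw [pow_succ, Matrix.mul_apply]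
    apply Finset.sum_eq_zero
    intro l _
    by_cases hl : (l : ℕ) = (i : ℕ) + k
    · have : (j : ℕ) ≠ (l : ℕ) + 1 := by omega
      simp [matA, this]
    · simp [ih i l hl]

lemma matA_pow_zero (N : ℕ) (ν : ℕ → ℂ) {n : ℕ} (hn : N ≤ n) : matA N ν ^ n = 0 := by
  ext i j
  have : (j : ℕ) ≠ (i : ℕ) + n := by omega
  simp [matA_pow_entry N ν n i j this]

lemma J_mul_A (N : ℕ) (ν : ℕ → ℂ) :
    matJ N * matA N ν = matA N ν * matJ N + matA N ν := by
  ext i j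
  simp only [matJ, Matrix.add_apply, Matrix.diagonal_mul, Matrix.mul_diagonal]
  by_cases h : (j : ℕ) = (i : ℕ) + 1
  · have hj := j.isLt
    have hi : (i : ℕ) + 1 ≤ N - 1 := by omega
    have : ((N - 1 - (i : ℕ) : ℕ) : ℂ) = ((N - 1 - (j : ℕ) : ℕ) : ℂ) + 1 := by
      have : (N - 1 - (i : ℕ) : ℕ) = (N - 1 - (j : ℕ) : ℕ) + 1 := by omega
      rw [this]; push_cast; ring
    simp [matA, h, this]; ring
  · simp [matA, h]

lemma J_mul_A_pow (N : ℕ) (ν : ℕ → ℂ) :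
    ∀ n : ℕ, matJ N * matA N ν ^ n = matA N ν ^ n * matJ N + (n : ℂ) • matA N ν ^ n := by
  intro n
  induction n with
  | zero => simp
  | succ n ih =>
    rw [pow_succ, ← Matrix.mul_assoc, ih]
    rw [Matrix.add_mul, Matrix.smul_mul, Matrix.mul_assoc, J_mul_A, Matrix.mul_add,
      ← Matrix.mul_assoc, ← pow_succ]
    push_cast
    rw [add_smul, one_smul]
    abel

lemma exp_smul_eq_sum (N : ℕ) (ν : ℕ → ℂ) (t : ℝ) :
    NormedSpace.exp ((t : ℂ) • matA N ν)
      = ∑ n ∈ Finset.range N, (((t : ℂ) ^ n) * ((n ! : ℂ))⁻¹) • matA N ν ^ n := by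
  rw [NormedSpace.exp_eq_tsum (𝕂 := ℂ)]
  beta_reduce
  rw [tsum_eq_sum (s := Finset.range N) (f := fun (n : ℕ) => ((n ! : ℂ))⁻¹ • ((t : ℂ) • matA N ν) ^ n)]
  · refine Finset.sum_congr rfl fun n _ => ?_
    rw [smul_pow, smul_smul, mul_comm]
  · intro n hn
    have hNn : N ≤ n := by by_contra h; exact hn (Finset.mem_range.mpr (by omega))
    rw [smul_pow, matA_pow_zero N ν hNn, smul_zero, smul_zero]

lemma sum_shift (N : ℕ) (ν : ℕ → ℂ) (t : ℝ) :
    ∑ n ∈ Finset.range N, (((t : ℂ) ^ n * ((n ! : ℂ))⁻¹) * n) • matA N ν ^ n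
      = ∑ n ∈ Finset.range N, ((t : ℂ) * ((t : ℂ) ^ n * ((n ! : ℂ))⁻¹)) • matA N ν ^ (n + 1) := by
  cases N with
  | zero => simp
  | succ m =>
    rw [Finset.sum_range_succ'
      (fun n => (((t : ℂ) ^ n * ((n ! : ℂ))⁻¹) * n) • matA (m + 1) ν ^ n) m]
    rw [Finset.sum_range_succ]
    rw [matA_pow_zero (m + 1) ν (le_refl (m + 1))]
    simp only [Nat.cast_zero, mul_zero, zero_smul, add_zero, smul_zero]
    refine Finset.sum_congr rfl fun i _ => ?_
    congr 1
    have h1 : ((i + 1)! : ℂ) = (i + 1) * (i ! : ℂ) := by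
      rw [Nat.factorial_succ]; push_cast; ring
    have h2 : ((i ! : ℂ)) ≠ 0 := Nat.cast_ne_zero.mpr (Nat.factorial_ne_zero i)
    have h3 : ((i : ℂ) + 1) ≠ 0 := by
      have := Nat.cast_add_one_ne_zero (R := ℂ) i
      exact this
    field_simp [h1]
    rw [h1]; push_cast; ring

lemma J_mul_exp (N : ℕ) (ν : ℕ → ℂ) (t : ℝ) :
    matJ N * NormedSpace.exp ((t : ℂ) • matA N ν)
      = NormedSpace.exp ((t : ℂ) • matA N ν) * matJ N
        + (t : ℂ) • (matA N ν * NormedSpace.exp ((t : ℂ) • matA N ν)) := by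
  rw [exp_smul_eq_sum, Finset.mul_sum, Finset.sum_mul, Finset.mul_sum, Finset.smul_sum]
  simp_rw [mul_smul_comm, smul_mul_assoc, J_mul_A_pow, smul_add, smul_smul, ← pow_succ']
  rw [Finset.sum_add_distrib, sum_shift]

lemma tJprod_diag (N : ℕ) (t : ℝ) :
    ∃ d : Fin N → ℂ, tJhalf N t * (tJhalf N t)ᴴ = Matrix.diagonal d := by
  exact ⟨_, by rw [tJhalf, Matrix.diagonal_conjTranspose, Matrix.diagonal_mul_diagonal]⟩

lemma J_comm_D (N : ℕ) (t : ℝ) :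
    matJ N * (tJhalf N t * (tJhalf N t)ᴴ) = (tJhalf N t * (tJhalf N t)ᴴ) * matJ N := by
  obtain ⟨d, hd⟩ := tJprod_diag N t
  rw [hd, matJ, Matrix.diagonal_mul_diagonal, Matrix.diagonal_mul_diagonal]
  exact congrArg Matrix.diagonal (funext fun i => mul_comm _ _)

lemma Jherm (N : ℕ) : (matJ N)ᴴ = matJ N := by
  rw [matJ, Matrix.diagonal_conjTranspose]
  exact congrArg Matrix.diagonal (funext fun i => star_natCast _)

lemma J_mul_expH (N : ℕ) (ν : ℕ → ℂ) (t : ℝ) :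
    matJ N * NormedSpace.exp ((t : ℂ) • (matA N ν)ᴴ)
      = NormedSpace.exp ((t : ℂ) • (matA N ν)ᴴ) * matJ N
        - (t : ℂ) • (NormedSpace.exp ((t : ℂ) • (matA N ν)ᴴ) * (matA N ν)ᴴ) := by
  have hE : NormedSpace.exp ((t : ℂ) • (matA N ν)ᴴ)
      = (NormedSpace.exp ((t : ℂ) • matA N ν))ᴴ := by
    rw [← Matrix.exp_conjTranspose]
    congr 1
    rw [Matrix.conjTranspose_smul]
    congr 1
    simp [Complex.star_def, Complex.conj_ofReal]
  have h := congrArg Matrix.conjTranspose (J_mul_exp N ν t)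
  rw [Matrix.conjTranspose_mul, Jherm, Matrix.conjTranspose_add, Matrix.conjTranspose_mul,
    Jherm, Matrix.conjTranspose_smul, Matrix.conjTranspose_mul] at h
  have hstar : star (t : ℂ) = (t : ℂ) := by
    simp [Complex.star_def, Complex.conj_ofReal]
  rw [hstar] at h
  rw [hE, h]
  abel

lemma keylemma {n : ℕ} (Jm A B E F D : Matrix (Fin n) (Fin n) ℂ) (t : ℂ)
    (h1 : Jm * E = E * Jm + t • (A * E))
    (h2 : Jm * F = F * Jm - t • (F * B))
    (h3 : Jm * D = D * Jm) :
    Jm * (E * D * F) - E * D * F * Jm = t • (A * (E * D * F) - E * D * F * B) := by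
  rw [← Matrix.mul_assoc Jm (E * D) F, ← Matrix.mul_assoc Jm E D, h1]
  rw [Matrix.add_mul, Matrix.add_mul, Matrix.smul_mul, Matrix.smul_mul]
  rw [Matrix.mul_assoc E Jm D, h3, ← Matrix.mul_assoc E D Jm]
  rw [Matrix.mul_assoc (E * D) Jm F, h2]
  rw [Matrix.mul_sub, Matrix.mul_smul]
  rw [smul_sub]
  simp only [Matrix.mul_assoc]
  abel

theorem J_comm_W (N : ℕ) (ν : ℕ → ℂ)
    (hν : ∀ i, 1 ≤ i → i ≤ N - 1 → ν i ≠ 0) (α : ℝ) (hα : -1 < α)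
    (t : ℝ) (ht : 0 < t) :
    matJ N * weightW N ν α t - weightW N ν α t * matJ N =
      (t : ℂ) • (matA N ν * weightW N ν α t - weightW N ν α t * (matA N ν)ᴴ) := by
  have key := keylemma (matJ N) (matA N ν) ((matA N ν)ᴴ)
    (NormedSpace.exp ((t : ℂ) • matA N ν)) (NormedSpace.exp ((t : ℂ) • (matA N ν)ᴴ))
    (tJhalf N t * (tJhalf N t)ᴴ) (t : ℂ)
    (J_mul_exp N ν t) (J_mul_expH N ν t) (J_comm_D N t)
  rw [weightW, Matrix.mul_assoc (NormedSpace.exp ((t : ℂ) • matA N ν)) (tJhalf N t)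
    ((tJhalf N t)ᴴ)]
  rw [Matrix.mul_smul, Matrix.smul_mul, Matrix.mul_smul, Matrix.smul_mul,
    ← smul_sub, ← smul_sub, key, smul_comm]
end
end

section
/- With A, J as above and A_2(t) = t(J − At), the conjugated matrix t^{−J/2} e^{−At} A_2(t) e^{At} t^{J/2} equals tJ for all t > 0; in particular it is Hermitian. -/
open Matrix
noncomputable section

/-- `t^(-J/2)`: diagonal with entries `t^(-(N-1-i)/2)`. -/
def tJhalfNeg (N : ℕ) (t : ℝ) : Matrix (Fin N) (Fin N) ℂ :=
  Matrix.diagonal fun i => (t : ℂ) ^ (-((((N - 1 - (i : ℕ) : ℕ) : ℂ)) / 2))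

/-- `A₂(t) = t (J - A t)`. -/
def matA2 (N : ℕ) (ν : ℕ → ℂ) (t : ℝ) : Matrix (Fin N) (Fin N) ℂ :=
  (t : ℂ) • (matJ N - (t : ℂ) • matA N ν)

/-! Since `J` is diagonal and `A` lives on the first superdiagonal, `⁅J, A⁆ = A`. In a Banach
algebra, `⁅J, X⁆ = X` forces `exp (-X) * J * exp X = J + X`, because
`s ↦ exp (-s X) J exp (s X) - s X` has derivative `exp (-s X) (⁅J, X⁆ - X) exp (s X) = 0`.
With `X = t A` this conjugates `A₂(t) = t (J - X)` to `t J`, which is diagonal and real, so it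
commutes with `t^(-J/2)`, and `t^(-J/2) t^(J/2) = 1`. -/

theorem NormedSpace.exp_neg_mul_mul_exp_of_lie_eq_self {𝔸 : Type*} [NormedRing 𝔸]
    [NormedAlgebra ℝ 𝔸] [CompleteSpace 𝔸] {J X : 𝔸} (h : ⁅J, X⁆ = X) :
    NormedSpace.exp (-X) * J * NormedSpace.exp X = J + X := by
  let +nondep : NormedAlgebra ℚ 𝔸 := NormedAlgebra.restrictScalars ℚ ℝ 𝔸
  rw [Ring.lie_def] at h
  let f : ℝ → 𝔸 := fun s => exp (s • -X) * J * exp (s • X) - s • X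
  have hexp : ∀ s : ℝ, exp (s • -X) * exp (s • X) = 1 := fun s => by
    rw [← exp_add_of_commute ((Commute.refl X).neg_left.smul_left s |>.smul_right s),
      smul_neg, neg_add_cancel, exp_zero]
  have hf : ∀ s, HasDerivAt f 0 s := fun s => by
    refine ((((hasDerivAt_exp_smul_const (-X) s).mul_const J).mul
      (hasDerivAt_exp_smul_const' X s)).sub ((hasDerivAt_id s).smul_const X)).congr_deriv ?_
    have hc : exp (s • -X) * X = X * exp (s • -X) :=
      ((Commute.refl X).neg_right.smul_right s).exp_right.eq.symm
    calc _ = exp (s • -X) * (J * X - X * J) * exp (s • X) - X := by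
          simp only [one_smul]; noncomm_ring
      _ = 0 := by rw [h, hc, mul_assoc, hexp, mul_one, sub_self]
  have := is_const_of_deriv_eq_zero (fun s => (hf s).differentiableAt) (fun s => (hf s).deriv) 1 0
  simpa [f, sub_eq_iff_eq_add] using this

theorem NormedSpace.exp_neg_mul_sub_mul_exp_of_lie_eq_self {𝔸 : Type*} [NormedRing 𝔸]
    [NormedAlgebra ℝ 𝔸] [CompleteSpace 𝔸] {J X : 𝔸} (h : ⁅J, X⁆ = X) :
    NormedSpace.exp (-X) * (J - X) * NormedSpace.exp X = J := by
  let +nondep : NormedAlgebra ℚ 𝔸 := NormedAlgebra.restrictScalars ℚ ℝ 𝔸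
  rw [mul_sub, sub_mul, exp_neg_mul_mul_exp_of_lie_eq_self h,
    (Commute.refl X).semiconjBy.exp_neg_mul_mul_exp_eq_self, add_sub_cancel_right]

theorem matJ_lie_matA (N : ℕ) (ν : ℕ → ℂ) : ⁅matJ N, matA N ν⁆ = matA N ν := by
  ext i j
  simp only [Ring.lie_def, matJ, matA, Matrix.sub_apply, diagonal_mul, mul_diagonal, of_apply]
  split_ifs with h
  · rw [show N - 1 - (i : ℕ) = N - 1 - (j : ℕ) + 1 by omega]
    push_cast
    ring
  · ring

theorem exp_neg_mul_matA2_mul_exp (N : ℕ) (ν : ℕ → ℂ) (t : ℝ) :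
    NormedSpace.exp (-(t : ℂ) • matA N ν) * matA2 N ν t * NormedSpace.exp ((t : ℂ) • matA N ν) =
      (t : ℂ) • matJ N := by
  have hJX : ⁅matJ N, (t : ℂ) • matA N ν⁆ = (t : ℂ) • matA N ν := by
    rw [Ring.lie_def, Matrix.mul_smul, Matrix.smul_mul, ← smul_sub, ← Ring.lie_def,
      matJ_lie_matA]
  have hconj : NormedSpace.exp (-((t : ℂ) • matA N ν)) * (matJ N - (t : ℂ) • matA N ν) *
      NormedSpace.exp ((t : ℂ) • matA N ν) = matJ N := by
    -- `exp` does not depend on the norm, so any Banach-algebra norm on matrices will do.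
    open scoped Matrix.Norms.Operator in
    exact NormedSpace.exp_neg_mul_sub_mul_exp_of_lie_eq_self hJX
  rw [neg_smul, matA2, Matrix.mul_smul, Matrix.smul_mul, hconj]

theorem tJhalfNeg_mul_tJhalf (N : ℕ) {t : ℝ} (ht : t ≠ 0) : tJhalfNeg N t * tJhalf N t = 1 := by
  rw [tJhalfNeg, tJhalf, diagonal_mul_diagonal, ← diagonal_one]
  congr with i
  rw [Complex.cpow_neg, inv_mul_cancel₀]
  exact Complex.cpow_ne_zero_iff.mpr (Or.inl (Complex.ofReal_ne_zero.mpr ht))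

theorem commute_tJhalfNeg_matJ (N : ℕ) (t : ℝ) : Commute (tJhalfNeg N t) (matJ N) :=
  commute_diagonal _ _

theorem matJ_isHermitian (N : ℕ) : (matJ N).IsHermitian :=
  isHermitian_diagonal_iff.mpr fun _ => .natCast _

theorem conj_A2_eq_tJ_general (N : ℕ) (ν : ℕ → ℂ) (t : ℝ) (ht : 0 < t) :
    tJhalfNeg N t * NormedSpace.exp (-(t : ℂ) • matA N ν) * matA2 N ν t *
        NormedSpace.exp ((t : ℂ) • matA N ν) * tJhalf N t = (t : ℂ) • matJ N ∧
      (tJhalfNeg N t * NormedSpace.exp (-(t : ℂ) • matA N ν) * matA2 N ν t *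
        NormedSpace.exp ((t : ℂ) • matA N ν) * tJhalf N t).IsHermitian := by
  have h : tJhalfNeg N t * NormedSpace.exp (-(t : ℂ) • matA N ν) * matA2 N ν t *
      NormedSpace.exp ((t : ℂ) • matA N ν) * tJhalf N t = (t : ℂ) • matJ N := by
    rw [mul_assoc (tJhalfNeg N t), mul_assoc (tJhalfNeg N t), exp_neg_mul_matA2_mul_exp,
      Matrix.mul_smul, Matrix.smul_mul, (commute_tJhalfNeg_matJ N t).eq, mul_assoc,
      tJhalfNeg_mul_tJhalf N ht.ne', mul_one]
  exact ⟨h, h ▸ (matJ_isHermitian N).smul (Complex.conj_ofReal t)⟩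

theorem conj_A2_eq_tJ (N : ℕ) (ν : ℕ → ℂ)
    (hν : ∀ i, 1 ≤ i → i ≤ N - 1 → ν i ≠ 0) (t : ℝ) (ht : 0 < t) :
    tJhalfNeg N t * NormedSpace.exp (-(t : ℂ) • matA N ν) * matA2 N ν t *
        NormedSpace.exp ((t : ℂ) • matA N ν) * tJhalf N t = (t : ℂ) • matJ N ∧
      (tJhalfNeg N t * NormedSpace.exp (-(t : ℂ) • matA N ν) * matA2 N ν t *
        NormedSpace.exp ((t : ℂ) • matA N ν) * tJhalf N t).IsHermitian :=
  conj_A2_eq_tJ_general N ν t ht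
end
end

section
/- Let Γ_{n,1} = n(A−I) + (J+αI)A − J and Γ_{n,2} = −n²A − n(J + (α+1)A + Y* − ad_A Y) + ((N−1)/|ν_{N−1}|²)(J − (αI+J)A), where the |ν_i| satisfy i(N−i)|ν_{N−1}|² = (N−1)|ν_i|² + (N−i−1)|ν_i|²|ν_{N−1}|² for i=1,…,N−2 and Y is the subdiagonal matrix with Y_{i+1,i} = i(N−i)/ν_i. Then Γ_{n,1} Γ_{n,2} = Γ_{n,2} Γ_{n,1} for all n ≥ 0. -/
open Matrix
noncomputable section

/-- The subdiagonal matrix with entries `Y_{i+1,i} = i(N-i)/ν_i`. -/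
def matY (N : ℕ) (ν : ℕ → ℂ) : Matrix (Fin N) (Fin N) ℂ :=
  Matrix.of fun i j =>
    if (i : ℕ) = (j : ℕ) + 1 then (((i : ℕ) * (N - (i : ℕ)) : ℕ) : ℂ) / ν (i : ℕ) else 0

/-- `Γ_{n,1} = n(A - I) + (J + αI)A - J`. -/
def Gamma1 (N : ℕ) (ν : ℕ → ℂ) (α : ℝ) (n : ℕ) : Matrix (Fin N) (Fin N) ℂ :=
  (n : ℂ) • (matA N ν - 1) + (matJ N + (α : ℂ) • (1 : Matrix (Fin N) (Fin N) ℂ)) * matA N ν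
    - matJ N

/-- `Γ_{n,2} = -n²A - n(J + (α+1)A + Y* - ad_A Y) + ((N-1)/|ν_{N-1}|²)(J - (αI + J)A)`. -/
def Gamma2 (N : ℕ) (ν : ℕ → ℂ) (α : ℝ) (n : ℕ) : Matrix (Fin N) (Fin N) ℂ :=
  -((n : ℂ) ^ 2) • matA N ν
    - (n : ℂ) • (matJ N + ((α : ℂ) + 1) • matA N ν + (matY N ν)ᴴ
        - (matA N ν * matY N ν - matY N ν * matA N ν))
    + (((N - 1 : ℕ) : ℂ) / (((‖ν (N - 1)‖ : ℝ) : ℂ)) ^ 2) •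
        (matJ N - ((α : ℂ) • (1 : Matrix (Fin N) (Fin N) ℂ) + matJ N) * matA N ν)

/-! The relation between the moduli `|ν_i|` says exactly that `Y* = (J + (κ - 1)I) A` with
`κ = (N-1)/|ν_{N-1}|²` (`normRatio`), and `AY`, `YA` are diagonal with `ad_A Y = 2J - (N-1)I`.
Substituting both into `Γ_{n,2}` leaves `Γ_{n,2} = -n(n + N - 1 + κ) I - (n + κ) Γ_{n,1}`,
a polynomial in `Γ_{n,1}`. -/

section ShiftMatrices

variable {R : Type*} [Semiring R] (N : ℕ)

def superdiag (a : ℕ → R) : Matrix (Fin N) (Fin N) R :=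
  of fun i j => if (j : ℕ) = i + 1 then a i else 0

def subdiag (b : ℕ → R) : Matrix (Fin N) (Fin N) R :=
  of fun i j => if (i : ℕ) = j + 1 then b i else 0

variable {N}

theorem superdiag_mul_subdiag (a b : ℕ → R) :
    superdiag N a * subdiag N b =
      diagonal fun i : Fin N => if (i : ℕ) + 1 < N then a i * b (i + 1) else 0 := by
  ext i j
  rw [mul_apply, diagonal_apply]
  by_cases hi : (i : ℕ) + 1 < N
  · rw [Finset.sum_eq_single ⟨i + 1, hi⟩]
    · simp [superdiag, subdiag, hi, Fin.ext_iff]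
    · intro k _ hk
      have : (k : ℕ) ≠ i + 1 := fun h => hk (Fin.ext h)
      simp [superdiag, this]
    · simp
  · refine (Finset.sum_eq_zero fun k _ => ?_).trans (by simp [hi])
    have : (k : ℕ) ≠ i + 1 := by omega
    simp [superdiag, this]

theorem subdiag_mul_superdiag (a b : ℕ → R) :
    subdiag N b * superdiag N a =
      diagonal fun i : Fin N => if 1 ≤ (i : ℕ) then b i * a (i - 1) else 0 := by
  ext i j
  rw [mul_apply, diagonal_apply]
  by_cases hi : 1 ≤ (i : ℕ)
  · rw [Finset.sum_eq_single ⟨i - 1, by omega⟩]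
    · simp [superdiag, subdiag, hi, Fin.ext_iff, eq_comm (a := (j : ℕ))]
    · intro k _ hk
      have : (i : ℕ) ≠ k + 1 := fun h => hk (Fin.ext (by simp; omega))
      simp [subdiag, this]
    · simp
  · refine (Finset.sum_eq_zero fun k _ => ?_).trans (by simp [hi])
    have : (i : ℕ) ≠ k + 1 := by omega
    simp [subdiag, this]

end ShiftMatrices

def normRatio (N : ℕ) (ν : ℕ → ℂ) : ℂ := ((N - 1 : ℕ) : ℂ) / (((‖ν (N - 1)‖ : ℝ) : ℂ)) ^ 2

def ModulusRelation (N : ℕ) (ν : ℕ → ℂ) : Prop :=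
  ∀ i : ℕ, 1 ≤ i → i ≤ N - 2 →
    ((i * (N - i) : ℕ) : ℝ) * ‖ν (N - 1)‖ ^ 2 =
      ((N - 1 : ℕ) : ℝ) * ‖ν i‖ ^ 2 + ((N - i - 1 : ℕ) : ℝ) * ‖ν i‖ ^ 2 * ‖ν (N - 1)‖ ^ 2

section

variable {N : ℕ} {ν : ℕ → ℂ}

theorem matA_eq_superdiag : matA N ν = superdiag N fun m => ν (m + 1) := rfl

theorem matY_eq_subdiag : matY N ν = subdiag N fun m => ((m * (N - m) : ℕ) : ℂ) / ν m := rfl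

theorem matA_mul_matY (hν : ∀ i, 1 ≤ i → i ≤ N - 1 → ν i ≠ 0) :
    matA N ν * matY N ν = diagonal fun i : Fin N => (((i + 1) * (N - 1 - i) : ℕ) : ℂ) := by
  rw [matA_eq_superdiag, matY_eq_subdiag, superdiag_mul_subdiag]
  congr 1
  funext i
  split_ifs with hi
  · rw [mul_div_cancel₀ _ (hν _ (by omega) (by omega)), Nat.sub_sub, Nat.add_comm 1]
  · simp [show N - 1 - i = 0 by omega]

theorem matY_mul_matA (hν : ∀ i, 1 ≤ i → i ≤ N - 1 → ν i ≠ 0) :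
    matY N ν * matA N ν = diagonal fun i : Fin N => ((i * (N - i) : ℕ) : ℂ) := by
  rw [matA_eq_superdiag, matY_eq_subdiag, subdiag_mul_superdiag]
  congr 1
  funext i
  split_ifs with hi
  · rw [Nat.sub_add_cancel hi, div_mul_cancel₀ _ (hν _ hi (by omega))]
  · simp [show (i : ℕ) = 0 by omega]

theorem matA_mul_matY_sub_matY_mul_matA (hν : ∀ i, 1 ≤ i → i ≤ N - 1 → ν i ≠ 0) :
    matA N ν * matY N ν - matY N ν * matA N ν = (2 : ℂ) • matJ N - ((N - 1 : ℕ) : ℂ) • 1 := by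
  rw [matA_mul_matY hν, matY_mul_matA hν, matJ]
  ext i j
  rcases eq_or_ne i j with rfl | hij
  · obtain ⟨d, hd⟩ : ∃ d, N = i + 1 + d := ⟨N - i - 1, by omega⟩
    simp only [Matrix.sub_apply, Matrix.smul_apply, diagonal_apply_eq, one_apply_eq, smul_eq_mul]
    rw [show N - 1 - i = d by omega, show N - i = d + 1 by omega, show N - 1 = i + d by omega]
    push_cast
    ring
  · simp [diagonal_apply_ne _ hij, one_apply_ne hij]

theorem ModulusRelation.add_normRatio_mul_sq_norm (hmod : ModulusRelation N ν)
    (hν : ∀ i, 1 ≤ i → i ≤ N - 1 → ν i ≠ 0) {k : ℕ} (hk : 1 ≤ k) (hkN : k ≤ N - 1) :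
    (((N - 1 - k : ℕ) : ℝ) + ((N - 1 : ℕ) : ℝ) / ‖ν (N - 1)‖ ^ 2) * ‖ν k‖ ^ 2 =
      ((k * (N - k) : ℕ) : ℝ) := by
  have hlast : ‖ν (N - 1)‖ ≠ 0 := norm_ne_zero_iff.mpr (hν _ (by omega) le_rfl)
  rcases hkN.eq_or_lt with rfl | hlt
  · rw [Nat.sub_self, show N - (N - 1) = 1 by omega]
    field_simp
    push_cast
    ring
  · have h := hmod k hk (by omega)
    rw [show N - k - 1 = N - 1 - k by omega] at h
    field_simp
    linear_combination -h

theorem conjTranspose_matY (hν : ∀ i, 1 ≤ i → i ≤ N - 1 → ν i ≠ 0)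
    (hmod : ModulusRelation N ν) :
    (matY N ν)ᴴ = (matJ N + (normRatio N ν - 1) • 1) * matA N ν := by
  ext i j
  simp only [add_mul, smul_mul, one_mul, matJ, diagonal_mul, Matrix.add_apply, Matrix.smul_apply,
    conjTranspose_apply, matY, matA, of_apply]
  split_ifs with h
  · have hν' : star (ν j) ≠ 0 := star_ne_zero.mpr (hν _ (by omega) (by omega))
    have key := congrArg (fun x : ℝ => (x : ℂ))
      (hmod.add_normRatio_mul_sq_norm hν (k := j) (by omega) (by omega))
    rw [star_div₀, star_natCast, div_eq_iff hν', ← h, show N - 1 - i = N - 1 - j + 1 by omega,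
      smul_eq_mul, ← add_mul, mul_assoc, Complex.star_def, Complex.mul_conj', normRatio]
    push_cast at key ⊢
    linear_combination -key
  · simp

theorem Gamma2_eq_smul_one_sub_smul_Gamma1 (hν : ∀ i, 1 ≤ i → i ≤ N - 1 → ν i ≠ 0)
    (hmod : ModulusRelation N ν) (α : ℝ) (n : ℕ) :
    Gamma2 N ν α n = (-(n : ℂ) * (n + (N - 1 : ℕ) + normRatio N ν)) • 1
      - ((n : ℂ) + normRatio N ν) • Gamma1 N ν α n := by
  rw [Gamma2, Gamma1, ← normRatio, conjTranspose_matY hν hmod,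
    matA_mul_matY_sub_matY_mul_matA hν]
  simp only [add_mul, smul_mul, one_mul]
  module

end

theorem Gamma_commute (N : ℕ) (ν : ℕ → ℂ) (α : ℝ)
    (hν : ∀ i, 1 ≤ i → i ≤ N - 1 → ν i ≠ 0)
    (hmod : ∀ i : ℕ, 1 ≤ i → i ≤ N - 2 →
      ((i * (N - i) : ℕ) : ℝ) * ‖ν (N - 1)‖ ^ 2 =
        ((N - 1 : ℕ) : ℝ) * ‖ν i‖ ^ 2 +
          ((N - i - 1 : ℕ) : ℝ) * ‖ν i‖ ^ 2 * ‖ν (N - 1)‖ ^ 2)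
    (n : ℕ) :
    Gamma1 N ν α n * Gamma2 N ν α n = Gamma2 N ν α n * Gamma1 N ν α n := by
  rw [Gamma2_eq_smul_one_sub_smul_Gamma1 hν hmod]
  exact (((Commute.one_right _).smul_right _).sub_right ((Commute.refl _).smul_right _)).eq
end
end

section
/- With Γ_{n,1}, Γ_{n,2} as above and Δ_i = (i−1)Γ_{n,1} − Γ_{n,2} + ((N−1)(N−i)/|ν_{N−1}|² + (i−1)(N−i)) I for i = 1,…,N, the ordered product Δ_1 Δ_2 ⋯ Δ_N = 0. -/
open Matrix
noncomputable section

/-- `Δ_i = (i-1)Γ_{n,1} - Γ_{n,2} + ((N-1)(N-i)/|ν_{N-1}|² + (i-1)(N-i)) I`. -/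
def Delta (N : ℕ) (ν : ℕ → ℂ) (α : ℝ) (n : ℕ) (i : ℕ) : Matrix (Fin N) (Fin N) ℂ :=
  ((i - 1 : ℕ) : ℂ) • Gamma1 N ν α n - Gamma2 N ν α n +
    ((((N - 1) * (N - i) : ℕ) : ℂ) / (((‖ν (N - 1)‖ : ℝ) : ℂ)) ^ 2 +
        (((i - 1) * (N - i) : ℕ) : ℂ)) • (1 : Matrix (Fin N) (Fin N) ℂ)


section helpers
variable {N : ℕ} {ν : ℕ → ℂ} (p q : Fin N)

lemma AY_off (h1 : (q:ℕ) ≠ (p:ℕ)) : (matA N ν * matY N ν) p q = 0 := by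
  rw [Matrix.mul_apply]
  apply Finset.sum_eq_zero; intro x _
  simp only [matA, matY, Matrix.of_apply]
  by_cases hx : (x:ℕ) = (p:ℕ)+1
  · rw [if_neg (fun h : (x:ℕ) = (q:ℕ)+1 => h1 (by omega)), mul_zero]
  · rw [if_neg hx, zero_mul]

lemma YA_off (h1 : (q:ℕ) ≠ (p:ℕ)) : (matY N ν * matA N ν) p q = 0 := by
  rw [Matrix.mul_apply]
  apply Finset.sum_eq_zero; intro x _
  simp only [matA, matY, Matrix.of_apply]
  by_cases hx : (p:ℕ) = (x:ℕ)+1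
  · rw [if_neg (fun h : (q:ℕ) = (x:ℕ)+1 => h1 (by omega)), mul_zero]
  · rw [if_neg hx, zero_mul]

lemma diagA_off (d : Fin N → ℂ) (h2 : (q:ℕ) ≠ (p:ℕ)+1) :
    (Matrix.diagonal d * matA N ν) p q = 0 := by
  rw [Matrix.diagonal_mul]
  simp [matA, h2]

lemma YH_off (h2 : (q:ℕ) ≠ (p:ℕ)+1) : (matY N ν)ᴴ p q = 0 := by
  simp [matY, Matrix.conjTranspose_apply, fun h : (q:ℕ) = (p:ℕ)+1 => h2 h]

end helpers

lemma delta_support (N : ℕ) (ν : ℕ → ℂ) (α : ℝ) (n m : ℕ) (p q : Fin N)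
    (h1 : (q:ℕ) ≠ (p:ℕ)) (h2 : (q:ℕ) ≠ (p:ℕ)+1) :
    Delta N ν α n m p q = 0 := by
  have hpq : p ≠ q := fun h => h1 (by rw [h])
  have hA : matA N ν p q = 0 := by simp [matA, h2]
  have hJ : matJ N p q = 0 := Matrix.diagonal_apply_ne _ hpq
  have hJ1 : matJ N + (α:ℂ) • (1 : Matrix (Fin N) (Fin N) ℂ)
      = Matrix.diagonal (fun i : Fin N => ((N - 1 - (i:ℕ) : ℕ) : ℂ) + α) := by
    rw [matJ, Matrix.smul_one_eq_diagonal, Matrix.diagonal_add]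
  have hJ2 : (α:ℂ) • (1 : Matrix (Fin N) (Fin N) ℂ) + matJ N
      = Matrix.diagonal (fun i : Fin N => (α : ℂ) + ((N - 1 - (i:ℕ) : ℕ) : ℂ)) := by
    rw [matJ, Matrix.smul_one_eq_diagonal, Matrix.diagonal_add]
  simp only [Delta, Gamma1, Gamma2, hJ1, hJ2, Matrix.sub_apply, Matrix.add_apply,
    Matrix.smul_apply, Matrix.neg_apply, smul_eq_mul,
    AY_off p q h1, YA_off p q h1, diagA_off p q _ h2, YH_off p q h2,
    Matrix.one_apply_ne hpq, hA, hJ]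
  ring

lemma AY_diag (N : ℕ) (ν : ℕ → ℂ) (hν : ∀ i, 1 ≤ i → i ≤ N - 1 → ν i ≠ 0) (k : Fin N) :
    (matA N ν * matY N ν) k k = ((((k:ℕ)+1) * (N - ((k:ℕ)+1)) : ℕ) : ℂ) := by
  rw [Matrix.mul_apply]
  by_cases h : (k:ℕ) + 1 < N
  · rw [Finset.sum_eq_single (⟨(k:ℕ)+1, h⟩ : Fin N)]
    · simp only [matA, matY, Matrix.of_apply]
      rw [if_true, if_true, mul_comm, div_mul_cancel₀]
      exact hν _ (by omega) (by omega)
      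
    · intro b _ hb
      simp only [matA, matY, Matrix.of_apply]
      rw [if_neg fun hc : (b:ℕ) = (k:ℕ)+1 => hb (Fin.ext hc), zero_mul]
    · exact fun hc => absurd (Finset.mem_univ _) hc
  · have hN : N = (k:ℕ) + 1 := by omega
    rw [show N - ((k:ℕ)+1) = 0 from by omega, Nat.mul_zero]
    rw [Finset.sum_eq_zero]
    · simp
    intro b _
    simp only [matA, Matrix.of_apply]
    rw [if_neg fun hc : (b:ℕ) = (k:ℕ)+1 => by omega, zero_mul]

lemma YA_diag (N : ℕ) (ν : ℕ → ℂ) (hν : ∀ i, 1 ≤ i → i ≤ N - 1 → ν i ≠ 0) (k : Fin N) :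
    (matY N ν * matA N ν) k k = (((k:ℕ) * (N - (k:ℕ)) : ℕ) : ℂ) := by
  rw [Matrix.mul_apply]
  by_cases h : 1 ≤ (k:ℕ)
  · rw [Finset.sum_eq_single (⟨(k:ℕ)-1, by omega⟩ : Fin N)]
    · simp only [matY, matA, Matrix.of_apply]
      rw [if_pos (by omega : (k:ℕ) = (k:ℕ) - 1 + 1), if_pos (by omega : (k:ℕ) = (k:ℕ) - 1 + 1),
        show (k:ℕ) - 1 + 1 = (k:ℕ) from by omega, div_mul_cancel₀]
      exact hν _ (by omega) (by omega)
    · intro b _ hb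
      simp only [matY, Matrix.of_apply]
      rw [if_neg fun hc : (k:ℕ) = (b:ℕ)+1 => hb (Fin.ext (by simp; omega)), zero_mul]
    · exact fun hc => absurd (Finset.mem_univ _) hc
  · have hk : (k:ℕ) = 0 := by omega
    rw [hk, Finset.sum_eq_zero]
    · simp
    intro b _
    simp only [matY, Matrix.of_apply]
    rw [if_neg fun hc : (k:ℕ) = (b:ℕ)+1 => by omega, zero_mul]

lemma delta_diag (N : ℕ) (ν : ℕ → ℂ) (α : ℝ) (n : ℕ)
    (hν : ∀ i, 1 ≤ i → i ≤ N - 1 → ν i ≠ 0) (k : Fin N) :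
    Delta N ν α n ((k:ℕ)+1) k k = 0 := by
  have hk2 : (k:ℕ) ≠ (k:ℕ)+1 := by omega
  have hA : matA N ν k k = 0 := by simp [matA]
  have hJ : matJ N k k = ((N - 1 - (k:ℕ) : ℕ) : ℂ) := Matrix.diagonal_apply_eq _ _
  have hJ1 : matJ N + (α:ℂ) • (1 : Matrix (Fin N) (Fin N) ℂ)
      = Matrix.diagonal (fun i : Fin N => ((N - 1 - (i:ℕ) : ℕ) : ℂ) + α) := by
    rw [matJ, Matrix.smul_one_eq_diagonal, Matrix.diagonal_add]
  have hJ2 : (α:ℂ) • (1 : Matrix (Fin N) (Fin N) ℂ) + matJ N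
      = Matrix.diagonal (fun i : Fin N => (α : ℂ) + ((N - 1 - (i:ℕ) : ℕ) : ℂ)) := by
    rw [matJ, Matrix.smul_one_eq_diagonal, Matrix.diagonal_add]
  simp only [Delta, Gamma1, Gamma2, hJ1, hJ2, Matrix.sub_apply, Matrix.add_apply,
    Matrix.smul_apply, Matrix.neg_apply, smul_eq_mul,
    diagA_off k k _ hk2, YH_off k k hk2, AY_diag N ν hν k, YA_diag N ν hν k,
    Matrix.one_apply_eq, hA, hJ]
  have hK : (k:ℕ) < N := k.isLt
  obtain ⟨M, hM⟩ : ∃ M, N = (k:ℕ) + M + 1 := ⟨N - (k:ℕ) - 1, by omega⟩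
  rw [show N - 1 - (k:ℕ) = M by omega, show (k:ℕ) + 1 - 1 = (k:ℕ) by omega,
    show N - ((k:ℕ)+1) = M by omega, show N - (k:ℕ) = M + 1 by omega,
    show N - 1 = (k:ℕ) + M by omega]
  push_cast
  ring

lemma prod_zero (N : ℕ) (ν : ℕ → ℂ) (α : ℝ) (n : ℕ)
    (hν : ∀ i, 1 ≤ i → i ≤ N - 1 → ν i ≠ 0) :
    ∀ m (p q : Fin N), (q:ℕ) < m →
      (((List.range m).map fun k => Delta N ν α n (k + 1)).prod) p q = 0 := by
  intro m
  induction m with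
  | zero => exact fun p q h => absurd h (by omega)
  | succ m ih =>
    intro p q hq
    rw [List.range_succ, List.map_append, List.prod_append, List.map_singleton,
      List.prod_singleton, Matrix.mul_apply]
    apply Finset.sum_eq_zero
    intro l _
    by_cases hl : (q:ℕ) = (l:ℕ)
    · by_cases hlm : (l:ℕ) = m
      · have hz : Delta N ν α n (m + 1) l q = 0 := by
          rw [Fin.ext hl, ← hlm]
          exact delta_diag N ν α n hν l
        rw [hz, mul_zero]
      · rw [ih p l (by omega), zero_mul]
    · by_cases hl2 : (q:ℕ) = (l:ℕ)+1
      · rw [ih p l (by omega), zero_mul]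
      · rw [delta_support N ν α n (m+1) l q hl hl2, mul_zero]

theorem Delta_prod_eq_zero (N : ℕ) (ν : ℕ → ℂ) (α : ℝ)
    (hν : ∀ i, 1 ≤ i → i ≤ N - 1 → ν i ≠ 0)
    (hmod : ∀ i : ℕ, 1 ≤ i → i ≤ N - 2 →
      ((i * (N - i) : ℕ) : ℝ) * ‖ν (N - 1)‖ ^ 2 =
        ((N - 1 : ℕ) : ℝ) * ‖ν i‖ ^ 2 +
          ((N - i - 1 : ℕ) : ℝ) * ‖ν i‖ ^ 2 * ‖ν (N - 1)‖ ^ 2)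
    (n : ℕ) :
    ((List.range N).map fun k => Delta N ν α n (k + 1)).prod = 0 := by
  ext p q
  rw [Matrix.zero_apply]
  exact prod_zero N ν α n hν N p q q.isLt
end
end

section
/- The two families of constraints on positive reals r_i = |ν_i|² (i=1,…,N−1): (a) i(N−i) r_{i+1} = (i+1)(N−i−1) r_i + r_i r_{i+1} for i=1,…,N−2, and (b) i(N−i) r_{N−1} = (N−1) r_i + (N−i−1) r_i r_{N−1} for i=1,…,N−2, are equivalent. -/
theorem constraint_families_equivalent (N : ℕ) (hN : 3 ≤ N) (r : ℕ → ℝ)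
    (hr : ∀ i, 1 ≤ i → i ≤ N - 1 → 0 < r i) :
    (∀ i : ℕ, 1 ≤ i → i ≤ N - 2 →
        ((i * (N - i) : ℕ) : ℝ) * r (i + 1) =
          (((i + 1) * (N - i - 1) : ℕ) : ℝ) * r i + r i * r (i + 1)) ↔
      (∀ i : ℕ, 1 ≤ i → i ≤ N - 2 →
        ((i * (N - i) : ℕ) : ℝ) * r (N - 1) =
          ((N - 1 : ℕ) : ℝ) * r i + ((N - i - 1 : ℕ) : ℝ) * r i * r (N - 1)) := by
  constructor
  · intro ha
    have hbase : ((N - 2) * (N - (N - 2)) : ℕ) * r (N - 1) =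
        ((N - 1 : ℕ) : ℝ) * r (N - 2) + ((N - (N - 2) - 1 : ℕ) : ℝ) * r (N - 2) * r (N - 1) := by
      have ha1 := ha (N - 2) (by omega) le_rfl
      rw [show N - 2 + 1 = N - 1 from by omega] at ha1
      rw [show N - (N - 2) = 2 from by omega] at ha1 ⊢
      rw [show (2:ℕ) - 1 = 1 from rfl] at ha1 ⊢
      rw [Nat.mul_one] at ha1
      push_cast at ha1 ⊢
      linarith [ha1]
    suffices h : ∀ j i : ℕ, 1 ≤ i → i ≤ N - 2 → N - 2 - i ≤ j →
        ((i * (N - i) : ℕ) : ℝ) * r (N - 1) =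
          ((N - 1 : ℕ) : ℝ) * r i + ((N - i - 1 : ℕ) : ℝ) * r i * r (N - 1) by
      intro i h1 h2
      exact h (N - 2 - i) i h1 h2 le_rfl
    intro j
    induction j with
    | zero =>
      intro i h1 h2 h3
      have hi : i = N - 2 := by omega
      subst hi
      exact hbase
    | succ j ih =>
      intro i h1 h2 h3
      by_cases hc : i = N - 2
      · subst hc; exact hbase
      · have hb1 := ih (i + 1) (by omega) (by omega) (by omega)
        have ha1 := ha i h1 h2
        have hbpos := hr (i + 1) (by omega) (by omega)
        obtain ⟨n, hn⟩ : ∃ n, N = i + n + 3 := ⟨N - i - 3, by omega⟩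
        subst hn
        simp only [show i + n + 3 - i = n + 3 from by omega,
          show i + n + 3 - i - 1 = n + 2 from by omega,
          show i + n + 3 - (i + 1) = n + 2 from by omega,
          show i + n + 3 - (i + 1) - 1 = n + 1 from by omega,
          show i + n + 3 - 1 = i + n + 2 from by omega] at hb1 ha1 ⊢
        push_cast at hb1 ha1 ⊢
        have hb0 : r (i + 1) ≠ 0 := ne_of_gt hbpos
        have key : r (i + 1) * (((i : ℝ) * ((n : ℝ) + 3)) * r (i + n + 2) -
            (((i : ℝ) + (n : ℝ) + 2) * r i + ((n : ℝ) + 2) * r i * r (i + n + 2))) = 0 := by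
          linear_combination r (i + n + 2) * ha1 + r i * hb1
        have h0 := (mul_eq_zero.mp key).resolve_left hb0
        linarith [h0]
  · intro hb i h1 h2
    by_cases hc : i = N - 2
    · subst hc
      have hb1 := hb (N - 2) h1 h2
      rw [show N - 2 + 1 = N - 1 from by omega]
      rw [show N - (N - 2) = 2 from by omega] at hb1 ⊢
      rw [show (2:ℕ) - 1 = 1 from rfl] at hb1 ⊢
      rw [Nat.mul_one]
      push_cast at hb1 ⊢
      linarith [hb1]
    · have hb1 := hb i h1 h2
      have hb2 := hb (i + 1) (by omega) (by omega)
      obtain ⟨n, hn⟩ : ∃ n, N = i + n + 3 := ⟨N - i - 3, by omega⟩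
      subst hn
      have hs := hr (i + n + 2) (by omega) (by omega)
      simp only [show i + n + 3 - i = n + 3 from by omega,
        show i + n + 3 - i - 1 = n + 2 from by omega,
        show i + n + 3 - (i + 1) = n + 2 from by omega,
        show i + n + 3 - (i + 1) - 1 = n + 1 from by omega,
        show i + n + 3 - 1 = i + n + 2 from by omega] at hb1 hb2 hs ⊢
      push_cast at hb1 hb2 ⊢
      set s := r (i + n + 2) with hsdef
      have hDi : (0 : ℝ) < ((i : ℝ) + (n : ℝ) + 2) + ((n : ℝ) + 2) * s := by positivity
      have hDj : (0 : ℝ) < ((i : ℝ) + (n : ℝ) + 2) + ((n : ℝ) + 1) * s := by positivity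
      have hA : r i = ((i : ℝ) * ((n : ℝ) + 3) * s) / (((i : ℝ) + (n : ℝ) + 2) + ((n : ℝ) + 2) * s) := by
        rw [eq_div_iff hDi.ne']
        linear_combination -hb1
      have hB : r (i + 1) = (((i : ℝ) + 1) * ((n : ℝ) + 2) * s) / (((i : ℝ) + (n : ℝ) + 2) + ((n : ℝ) + 1) * s) := by
        rw [eq_div_iff hDj.ne']
        linear_combination -hb2
      rw [hA, hB]
      field_simp
      ring
end
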